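/- For positive reals $a_1,a_2,a_3,a_4$: if $\frac{1}{a_i} \ge \sum_{j \ne i} \frac{1}{a_j}$ for some $i$, then $(a_1+a_2+a_3+a_4) - 2a_i \ge \frac{1}{\sqrt{2}}(a_1+a_2+a_3+a_4)$. -/
import Mathlib


open Real

theorem stmt_17 (a : Fin 4 → ℝ) (ha : ∀ i, 0 < a i) (i : Fin 4)
    (h : ∑ j ∈ Finset.univ.erase i, 1 / a j ≤ 1 / a i) :
    (1 / Real.sqrt 2) * (∑ j : Fin 4, a j) ≤ (∑ j : Fin 4, a j) - 2 * a i := by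
  set s := Finset.univ.erase i with hs
  set T := ∑ j ∈ s, a j with hT
  have hcard : s.card = 3 := by
    rw [hs, Finset.card_erase_of_mem (Finset.mem_univ i)]; simp
  -- Cauchy-Schwarz: 9 ≤ T * ∑ 1/a
  have hcs : (9 : ℝ) ≤ T * ∑ j ∈ s, 1 / a j := by
    have key := Finset.sum_mul_sq_le_sq_mul_sq s (fun j => Real.sqrt (a j))
      (fun j => 1 / Real.sqrt (a j))
    have h1 : ∑ j ∈ s, Real.sqrt (a j) * (1 / Real.sqrt (a j)) = 3 := by
      have heq : ∀ j ∈ s, Real.sqrt (a j) * (1 / Real.sqrt (a j)) = 1 := by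
        intro j _
        have hne : Real.sqrt (a j) ≠ 0 := ne_of_gt (Real.sqrt_pos.mpr (ha j))
        field_simp
      rw [Finset.sum_congr rfl heq, Finset.sum_const, hcard]
      norm_num
    have h2 : ∀ j ∈ s, Real.sqrt (a j) ^ 2 = a j := fun j _ => Real.sq_sqrt (ha j).le
    have h3 : ∀ j ∈ s, (1 / Real.sqrt (a j)) ^ 2 = 1 / a j := by
      intro j _
      rw [div_pow, one_pow, Real.sq_sqrt (ha j).le]
    rw [h1, Finset.sum_congr rfl h2, Finset.sum_congr rfl h3] at key
    nlinarith [key]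
  have hi := ha i
  have hinv : ∑ j ∈ s, 1 / a j ≤ 1 / a i := h
  have hTpos : 0 < T := Finset.sum_pos (fun j _ => ha j) (by
    refine ⟨i.succAbove 0, ?_⟩
    rw [hs, Finset.mem_erase]
    exact ⟨Fin.succAbove_ne i 0, Finset.mem_univ _⟩)
  have h9 : 9 * a i ≤ T := by
    have : (9 : ℝ) ≤ T * (1 / a i) := le_trans hcs (by
      have h4 : 0 ≤ ∑ j ∈ s, 1 / a j :=
        Finset.sum_nonneg fun j _ => one_div_nonneg.mpr (ha j).le
      nlinarith)
    rw [mul_one_div, le_div_iff₀ hi] at this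
    linarith
  have hsum : (∑ j : Fin 4, a j) = a i + T := by
    rw [hT, hs, Finset.add_sum_erase _ _ (Finset.mem_univ i)]
  rw [hsum]
  have hs2 : Real.sqrt 2 ^ 2 = 2 := Real.sq_sqrt (by norm_num)
  have hs2pos : 0 < Real.sqrt 2 := Real.sqrt_pos.mpr (by norm_num)
  rw [div_mul_eq_mul_div, one_mul, div_le_iff₀ hs2pos]
  nlinarith [hi, h9, hs2, hs2pos]
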